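/- arXiv:1503.00408 — 2 statements merged into one kernel-verified Lean document; each statement's English description precedes it below -/
import Mathlib

section
/- Let (W,S) be a Coxeter system, J, K ⊆ S, and d ∈ D_{K,J}. Then every element of the double coset W_K d W_J has a factorization vdu with v ∈ D^K_{K ∩ dJd⁻¹} and u ∈ W_J satisfying l(vdu) = l(v) + l(d) + l(u). -/
/-!
The exchange condition comes from Björner–Brenti's representation `η` of `W` on `W × ZMod 2`:
the parity of the number of occurrences of `t` in the right inversion sequence of a word depends
only on its product, so a right descent `s` of `π ω` occurs in the right inversion sequence of every
word `ω` (compare with a reduced word ending in `s`). It gives the standard facts on parabolic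
subgroups: additivity of lengths on `D_J × W_J`, Deodhar's lemma (`sd ∈ D_J` or `sd = ds'` with
`s' ∈ J`) and Kilmoyer's theorem `W_K ∩ d W_J d⁻¹ ⊆ W_{K ∩ dJd⁻¹}`.

Write `a = v c` with `v ∈ D_L`, `c ∈ W_L`, `L = K ∩ dJd⁻¹`; then `a d b = v d (d⁻¹ c d b)` and
`d⁻¹ c d ∈ W_J`. Lengths add because `v d ∈ D_J`: if `l(v d s) < l(v d)` with `s ∈ J`, exchange
either shortens `d s`, impossible for `d ∈ D_J`, or turns `v` into a shorter `v c'` with `c' ∈ W_K`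
and `d⁻¹ c' d = s`, so `c' ∈ W_L` by Kilmoyer, contradicting `v ∈ D_L`.
-/

section
variable {B W : Type*} [Group W] {M : CoxeterMatrix B} (cs : CoxeterSystem M W)

/-- The set of minimal length left coset representatives of `W_J`. -/
def DLeft (J : Set B) : Set W :=
  {w | ∀ j ∈ J, cs.length (w * cs.simple j) > cs.length w}

/-- The set of minimal length right coset representatives of `W_K` (i.e. `D_K⁻¹`). -/
def DRight (K : Set B) : Set W :=
  {w | ∀ i ∈ K, cs.length (cs.simple i * w) > cs.length w}

/-- The standard parabolic subgroup `W_J`, as a set. -/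
def WPar (J : Set B) : Set W := (Subgroup.closure (cs.simple '' J) : Subgroup W)

/-- `K ∩ dJd⁻¹`, as a subset of the index set `B`. -/
def conjInter (J K : Set B) (d : W) : Set B :=
  {i ∈ K | ∃ j ∈ J, cs.simple i = d * cs.simple j * d⁻¹}

namespace CoxeterSystem

theorem simple_mul_mul_simple_eq_iff (i : B) (t x : W) :
    cs.simple i * t * cs.simple i = x ↔ t = cs.simple i * x * cs.simple i := by
  constructor <;> rintro rfl <;> simp [mul_assoc]

section Eta

open Classical

/-- Björner–Brenti's `η_s`, acting on `W × ZMod 2` rather than `T × {±1}`. -/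
noncomputable def eta (i : B) : Equiv.Perm (W × ZMod 2) :=
  Function.Involutive.toPerm
    (fun p => (cs.simple i * p.1 * cs.simple i, p.2 + if p.1 = cs.simple i then 1 else 0))
    (by
      rintro ⟨t, ε⟩
      ext
      · simp [mul_assoc]
      · simp only [simple_mul_mul_simple_eq_iff, cs.simple_mul_simple_self, one_mul]
        split_ifs <;> simp [add_assoc, CharTwo.add_self_eq_zero])

theorem eta_apply (i : B) (t : W) (ε : ZMod 2) :
    cs.eta i (t, ε) = (cs.simple i * t * cs.simple i, ε + if t = cs.simple i then 1 else 0) :=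
  rfl

theorem eta_mul_eta_pow_apply (i i' : B) (k : ℕ) (t : W) (ε : ZMod 2) :
    ((cs.eta i * cs.eta i') ^ k) (t, ε) =
      ((cs.simple i * cs.simple i') ^ k * t * ((cs.simple i * cs.simple i') ^ k)⁻¹,
        ε + ∑ l ∈ Finset.range (2 * k),
          if t = (cs.simple i * cs.simple i')⁻¹ ^ l * cs.simple i' then 1 else 0) := by
  set p := cs.simple i * cs.simple i'
  have hconj (t : W) (l : ℕ) :
      p * t * p⁻¹ = p⁻¹ ^ l * cs.simple i' ↔ t = p⁻¹ ^ (l + 2) * cs.simple i' := by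
    have hp : cs.simple i' * p = p⁻¹ * cs.simple i' := by simp [p, mul_assoc]
    have : p⁻¹ * (p⁻¹ ^ l * cs.simple i') * p = p⁻¹ ^ (l + 2) * cs.simple i' := by
      rw [mul_assoc, mul_assoc, hp, ← mul_assoc, ← mul_assoc, ← pow_succ', ← pow_succ]
    rw [← this]
    constructor
    · intro h; rw [← h]; group
    · rintro rfl; group
  induction k generalizing t ε with
  | zero => simp
  | succ k ih =>
    rw [pow_succ, Equiv.Perm.mul_apply, Equiv.Perm.mul_apply, eta_apply, eta_apply, ih]
    have hfst : cs.simple i * (cs.simple i' * t * cs.simple i') * cs.simple i = p * t * p⁻¹ := by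
      simp [p, mul_assoc]
    have hsnd : cs.simple i' * t * cs.simple i' = cs.simple i ↔ t = p⁻¹ ^ 1 * cs.simple i' := by
      rw [simple_mul_mul_simple_eq_iff]; simp [p, mul_assoc]
    simp only [hfst, hsnd, hconj, Prod.mk.injEq]
    constructor
    · group
    · rw [show 2 * (k + 1) = 2 * k + 1 + 1 by ring, Finset.sum_range_succ', Finset.sum_range_succ']
      simp only [pow_zero, one_mul]
      abel

theorem isLiftable_eta : M.IsLiftable cs.eta := by
  intro i i'
  have hp := cs.simple_mul_simple_pow i i'
  ext ⟨t, ε⟩ <;> rw [eta_mul_eta_pow_apply, hp]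
  · simp
  · have hperiodic (l : ℕ) : (cs.simple i * cs.simple i')⁻¹ ^ (M i i' + l) =
        (cs.simple i * cs.simple i')⁻¹ ^ l := by
      rw [pow_add, inv_pow, hp, inv_one, one_mul]
    rw [two_mul, Finset.sum_range_add]
    simp only [hperiodic, CharTwo.add_self_eq_zero, add_zero, Equiv.Perm.one_apply]

noncomputable def etaHom : W →* Equiv.Perm (W × ZMod 2) := cs.lift ⟨cs.eta, cs.isLiftable_eta⟩

theorem etaHom_simple (i : B) : cs.etaHom (cs.simple i) = cs.eta i :=
  cs.lift_apply_simple cs.isLiftable_eta i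

theorem etaHom_wordProd_apply (ω : List B) (t : W) (ε : ZMod 2) :
    cs.etaHom (cs.wordProd ω) (t, ε) =
      (cs.wordProd ω * t * (cs.wordProd ω)⁻¹, ε + ((cs.rightInvSeq ω).count t : ZMod 2)) := by
  induction ω generalizing ε with
  | nil => simp
  | cons i ω ih =>
    have hconj : cs.wordProd ω * t * (cs.wordProd ω)⁻¹ = cs.simple i ↔
        (cs.wordProd ω)⁻¹ * cs.simple i * cs.wordProd ω = t := by
      constructor
      · intro h; rw [← h]; group
      · rintro rfl; group
    rw [cs.wordProd_cons, map_mul, Equiv.Perm.mul_apply, ih, etaHom_simple, eta_apply,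
      rightInvSeq, List.count_cons, hconj]
    simp only [beq_iff_eq, Nat.cast_add, Nat.cast_ite, Nat.cast_one, Nat.cast_zero, mul_inv_rev,
      cs.inv_simple, Prod.mk.injEq]
    exact ⟨by group, by abel⟩

theorem count_rightInvSeq_eq_of_wordProd_eq {ω ω' : List B} (h : cs.wordProd ω = cs.wordProd ω')
    (t : W) : ((cs.rightInvSeq ω).count t : ZMod 2) = (cs.rightInvSeq ω').count t := by
  simpa [etaHom_wordProd_apply] using congrArg (fun w => (cs.etaHom w (t, 0)).2) h

theorem simple_mem_rightInvSeq {ω : List B} {i : B}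
    (hi : cs.length (cs.wordProd ω * cs.simple i) < cs.length (cs.wordProd ω)) :
    cs.simple i ∈ cs.rightInvSeq ω := by
  obtain ⟨ω', hω', hω'i⟩ := cs.exists_isReduced (cs.wordProd ω * cs.simple i)
  have hprod : cs.wordProd ω = cs.wordProd (ω'.concat i) := by
    rw [cs.wordProd_concat, ← hω'i, cs.simple_mul_simple_cancel_right]
  have hred : cs.IsReduced (ω'.concat i) := by
    have := cs.length_mul_simple (cs.wordProd ω) i
    rw [IsReduced, ← hprod, List.length_concat, ← hω', ← hω'i]
    omega
  have hcount : (cs.rightInvSeq (ω'.concat i)).count (cs.simple i) = 1 :=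
    List.count_eq_one_of_mem hred.nodup_rightInvSeq <| by
      rw [rightInvSeq_concat, List.concat_eq_append]
      exact List.mem_concat_self
  have hparity := cs.count_rightInvSeq_eq_of_wordProd_eq hprod (cs.simple i)
  rw [hcount, Nat.cast_one] at hparity
  by_contra hnot
  rw [List.count_eq_zero_of_not_mem hnot, Nat.cast_zero] at hparity
  exact zero_ne_one hparity

end Eta

theorem exists_wordProd_eraseIdx_eq {ω : List B} {i : B}
    (hi : cs.length (cs.wordProd ω * cs.simple i) < cs.length (cs.wordProd ω)) :
    ∃ k < ω.length, cs.wordProd (ω.eraseIdx k) = cs.wordProd ω * cs.simple i := by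
  obtain ⟨k, hk, hget⟩ := List.getElem_of_mem (cs.simple_mem_rightInvSeq hi)
  refine ⟨k, by simpa using hk, ?_⟩
  rw [← wordProd_mul_getD_rightInvSeq, List.getD_eq_getElem _ _ hk, hget]

theorem exists_isReduced_sublist (ω : List B) :
    ∃ ω', ω'.Sublist ω ∧ cs.IsReduced ω' ∧ cs.wordProd ω' = cs.wordProd ω := by
  induction ω using List.reverseRecOn with
  | nil => exact ⟨[], List.Sublist.refl _, by simp [IsReduced], rfl⟩
  | append_singleton ω i ih =>
    obtain ⟨ω', hsub, hred, hprod⟩ := ih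
    rw [cs.wordProd_append, cs.wordProd_singleton, ← hprod]
    rcases cs.length_mul_simple (cs.wordProd ω') i with hlen | hlen
    · refine ⟨ω' ++ [i], hsub.append_right [i], ?_,
        by rw [cs.wordProd_append, cs.wordProd_singleton]⟩
      rw [IsReduced, cs.wordProd_append, cs.wordProd_singleton, hlen, hred, List.length_append,
        List.length_singleton]
    · obtain ⟨k, hk, hdel⟩ := cs.exists_wordProd_eraseIdx_eq (ω := ω') (i := i) (by omega)
      refine ⟨ω'.eraseIdx k, ((List.eraseIdx_sublist _ _).trans hsub).trans
        (List.sublist_append_left _ _), ?_, hdel⟩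
      rw [IsReduced, hdel, List.length_eraseIdx_of_lt hk, ← hred]
      omega

theorem length_wordProd_eraseIdx_lt {ω : List B} (hω : cs.IsReduced ω) {k : ℕ}
    (hk : k < ω.length) : cs.length (cs.wordProd (ω.eraseIdx k)) < cs.length (cs.wordProd ω) := by
  have := cs.length_wordProd_le (ω.eraseIdx k)
  rw [List.length_eraseIdx_of_lt hk] at this
  rw [hω]
  omega

end CoxeterSystem

theorem one_mem_WPar (J : Set B) : (1 : W) ∈ WPar cs J := (Subgroup.closure _).one_mem

theorem mul_mem_WPar {J : Set B} {x y : W} (hx : x ∈ WPar cs J) (hy : y ∈ WPar cs J) :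
    x * y ∈ WPar cs J := (Subgroup.closure _).mul_mem hx hy

theorem inv_mem_WPar {J : Set B} {x : W} (hx : x ∈ WPar cs J) : x⁻¹ ∈ WPar cs J :=
  (Subgroup.closure _).inv_mem hx

theorem simple_mem_WPar {J : Set B} {i : B} (hi : i ∈ J) : cs.simple i ∈ WPar cs J :=
  Subgroup.subset_closure ⟨i, hi, rfl⟩

theorem WPar_mono {J K : Set B} (h : J ⊆ K) : WPar cs J ⊆ WPar cs K :=
  Subgroup.closure_mono (Set.image_mono h)

theorem mem_WPar_univ (w : W) : w ∈ WPar cs Set.univ := by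
  simp [WPar, Set.image_univ, cs.subgroup_closure_range_simple]

theorem wordProd_mem_WPar {J : Set B} {ω : List B} (hω : ∀ i ∈ ω, i ∈ J) :
    cs.wordProd ω ∈ WPar cs J := by
  induction ω with
  | nil => exact one_mem_WPar cs J
  | cons i ω ih =>
    rw [cs.wordProd_cons]
    exact mul_mem_WPar cs (simple_mem_WPar cs (hω i List.mem_cons_self))
      (ih fun j hj => hω j (List.mem_cons_of_mem i hj))

theorem exists_word_of_mem_WPar {J : Set B} {w : W} (hw : w ∈ WPar cs J) :
    ∃ ω : List B, (∀ i ∈ ω, i ∈ J) ∧ cs.wordProd ω = w := by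
  induction hw using Subgroup.closure_induction with
  | mem x hx =>
    obtain ⟨i, hi, rfl⟩ := hx
    exact ⟨[i], by simpa using hi, cs.wordProd_singleton i⟩
  | one => exact ⟨[], by simp, cs.wordProd_nil⟩
  | mul x y _ _ hx hy =>
    obtain ⟨ωx, hωx, rfl⟩ := hx
    obtain ⟨ωy, hωy, rfl⟩ := hy
    exact ⟨ωx ++ ωy, fun i hi => (List.mem_append.mp hi).elim (hωx i) (hωy i),
      cs.wordProd_append ωx ωy⟩
  | inv x _ hx =>
    obtain ⟨ω, hω, rfl⟩ := hx
    exact ⟨ω.reverse, fun i hi => hω i (List.mem_reverse.mp hi), cs.wordProd_reverse ω⟩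

theorem exists_isReduced_of_mem_WPar {J : Set B} {w : W} (hw : w ∈ WPar cs J) :
    ∃ ω : List B, cs.IsReduced ω ∧ (∀ i ∈ ω, i ∈ J) ∧ cs.wordProd ω = w := by
  obtain ⟨ω, hωJ, rfl⟩ := exists_word_of_mem_WPar cs hw
  obtain ⟨ω', hsub, hred, hprod⟩ := cs.exists_isReduced_sublist ω
  exact ⟨ω', hred, fun i hi => hωJ i (hsub.subset hi), hprod⟩

theorem exists_length_mul_simple_lt_of_mem_WPar {J : Set B} {w : W} (hw : w ∈ WPar cs J)
    (hne : w ≠ 1) : ∃ j ∈ J, cs.length (w * cs.simple j) < cs.length w := by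
  obtain ⟨ω, hred, hωJ, rfl⟩ := exists_isReduced_of_mem_WPar cs hw
  obtain ⟨ω₀, j, rfl⟩ := (List.eq_nil_or_concat ω).resolve_left (by rintro rfl; simp at hne)
  refine ⟨j, hωJ j (by simp), ?_⟩
  have := cs.length_wordProd_le ω₀
  rw [hred, cs.wordProd_concat, cs.simple_mul_simple_cancel_right, List.length_concat]
  omega

theorem induction_WPar_right {J : Set B} {p : W → Prop} (one : p 1)
    (mul_simple : ∀ u ∈ WPar cs J, ∀ j ∈ J,
      cs.length (u * cs.simple j) = cs.length u + 1 → p u → p (u * cs.simple j))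
    {w : W} (hw : w ∈ WPar cs J) : p w := by
  induction hlen : cs.length w using Nat.strong_induction_on generalizing w with
  | _ n ih =>
    rcases eq_or_ne w 1 with rfl | hne
    · exact one
    obtain ⟨j, hj, hlt⟩ := exists_length_mul_simple_lt_of_mem_WPar cs hw hne
    have hw' := mul_mem_WPar cs hw (simple_mem_WPar cs hj)
    have hlen' : cs.length (w * cs.simple j * cs.simple j) = cs.length (w * cs.simple j) + 1 := by
      rw [cs.simple_mul_simple_cancel_right]
      have := cs.length_mul_simple w j
      omega
    simpa using mul_simple _ hw' j hj hlen' (ih _ (hlen ▸ hlt) hw' rfl)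

theorem induction_WPar_left {J : Set B} {p : W → Prop} (one : p 1)
    (simple_mul : ∀ u ∈ WPar cs J, ∀ j ∈ J,
      cs.length (cs.simple j * u) = cs.length u + 1 → p u → p (cs.simple j * u))
    {w : W} (hw : w ∈ WPar cs J) : p w := by
  simpa using induction_WPar_right cs (p := fun u => p u⁻¹) (by simpa using one)
    (fun u hu j hj hlen hpu => by
      rw [mul_inv_rev, cs.inv_simple]
      refine simple_mul _ (inv_mem_WPar cs hu) j hj ?_ hpu
      rw [← cs.length_inv, mul_inv_rev, inv_inv, cs.inv_simple, hlen, cs.length_inv])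
    (inv_mem_WPar cs hw)

theorem exchange_of_mem_WPar {K : Set B} {x y : W} (hx : x ∈ WPar cs K) {i : B}
    (hi : cs.length (x * y * cs.simple i) < cs.length (x * y)) :
    cs.length (y * cs.simple i) < cs.length y ∨
      ∃ x' ∈ WPar cs K, cs.length x' < cs.length x ∧ x' * y = x * y * cs.simple i := by
  obtain ⟨ωx, hωx, hωxK, rfl⟩ := exists_isReduced_of_mem_WPar cs hx
  obtain ⟨ωy, hωy, rfl⟩ := cs.exists_isReduced y
  rw [← cs.wordProd_append] at hi
  obtain ⟨k, hk, hdel⟩ := cs.exists_wordProd_eraseIdx_eq hi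
  rw [cs.wordProd_append] at hdel
  rcases lt_or_ge k ωx.length with hkx | hkx
  · right
    rw [List.eraseIdx_append_of_lt_length hkx, cs.wordProd_append] at hdel
    exact ⟨_, wordProd_mem_WPar cs fun j hj => hωxK j ((List.eraseIdx_sublist _ _).subset hj),
      cs.length_wordProd_eraseIdx_lt hωx hkx, hdel⟩
  · left
    rw [List.eraseIdx_append_of_length_le hkx, cs.wordProd_append, mul_assoc] at hdel
    rw [← mul_left_cancel hdel]
    rw [List.length_append] at hk
    exact cs.length_wordProd_eraseIdx_lt hωy (by omega)

theorem exists_forall_length_le_mul (a : W) (J : Set B) :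
    ∃ c ∈ WPar cs J, ∀ z ∈ WPar cs J, cs.length (a * c) ≤ cs.length (a * c * z) := by
  let c := Function.argminOn (fun c => cs.length (a * c)) (WPar cs J) ⟨1, one_mem_WPar cs J⟩
  have hc : c ∈ WPar cs J := Function.argminOn_mem _ _ _
  refine ⟨c, hc, fun z hz => ?_⟩
  rw [mul_assoc]
  exact Function.argminOn_le (fun c => cs.length (a * c)) _ (mul_mem_WPar cs hc hz)

theorem mem_DLeft_of_forall_length_le {J : Set B} {v : W}
    (hv : ∀ z ∈ WPar cs J, cs.length v ≤ cs.length (v * z)) : v ∈ DLeft cs J :=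
  fun j hj => lt_of_le_of_ne (hv _ (simple_mem_WPar cs hj)) (cs.length_mul_simple_ne v j).symm

theorem length_mul_of_forall_length_le {J : Set B} {v : W}
    (hv : ∀ z ∈ WPar cs J, cs.length v ≤ cs.length (v * z)) {u : W} (hu : u ∈ WPar cs J) :
    cs.length (v * u) = cs.length v + cs.length u := by
  refine induction_WPar_right cs (p := fun u => cs.length (v * u) = cs.length v + cs.length u)
    (by simp) (fun u hu j hj hlen ih => ?_) hu
  rcases cs.length_mul_simple (v * u) j with hup | hdown
  · rw [← mul_assoc, hup, ih, hlen, add_assoc]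
  · rcases exchange_of_mem_WPar cs (mem_WPar_univ cs v) (y := u) (i := j) (by omega) with
      hu' | ⟨x', -, hx', hx'u⟩
    · omega
    · have hx'eq : x' = v * (u * cs.simple j * u⁻¹) := by
        rw [eq_mul_inv_iff_mul_eq.mpr hx'u]; group
      have := hv _ (mul_mem_WPar cs (mul_mem_WPar cs hu (simple_mem_WPar cs hj))
        (inv_mem_WPar cs hu))
      rw [← hx'eq] at this
      omega

theorem forall_length_le_of_mem_DLeft {J : Set B} {d : W} (hd : d ∈ DLeft cs J) :
    ∀ z ∈ WPar cs J, cs.length d ≤ cs.length (d * z) := by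
  obtain ⟨c, hc, hmin⟩ := exists_forall_length_le_mul cs d J
  suffices hc1 : c⁻¹ = 1 by simpa [inv_eq_one.mp hc1] using hmin
  by_contra hne
  obtain ⟨j, hj, hlt⟩ := exists_length_mul_simple_lt_of_mem_WPar cs (inv_mem_WPar cs hc) hne
  have h1 := length_mul_of_forall_length_le cs hmin (inv_mem_WPar cs hc)
  have h2 := length_mul_of_forall_length_le cs hmin
    (mul_mem_WPar cs (inv_mem_WPar cs hc) (simple_mem_WPar cs hj))
  simp only [mul_inv_cancel_right, ← mul_assoc] at h1 h2
  have := hd j hj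
  omega

theorem length_mul_of_mem_DLeft {J : Set B} {d u : W} (hd : d ∈ DLeft cs J)
    (hu : u ∈ WPar cs J) : cs.length (d * u) = cs.length d + cs.length u :=
  length_mul_of_forall_length_le cs (forall_length_le_of_mem_DLeft cs hd) hu

theorem length_mul_of_mem_DRight {K : Set B} {d v : W} (hd : d ∈ DRight cs K)
    (hv : v ∈ WPar cs K) : cs.length (v * d) = cs.length v + cs.length d := by
  have hd' : d⁻¹ ∈ DLeft cs K := fun i hi => by
    simpa [← cs.length_inv (d⁻¹ * _)] using hd i hi
  rw [← cs.length_inv, mul_inv_rev, length_mul_of_mem_DLeft cs hd' (inv_mem_WPar cs hv),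
    cs.length_inv, cs.length_inv, add_comm]

theorem exists_mem_DLeft_mul_eq (a : W) (J : Set B) :
    ∃ v ∈ DLeft cs J, ∃ c ∈ WPar cs J, a = v * c := by
  obtain ⟨c, hc, hmin⟩ := exists_forall_length_le_mul cs a J
  exact ⟨a * c, mem_DLeft_of_forall_length_le cs hmin, c⁻¹, inv_mem_WPar cs hc, by group⟩

theorem exists_simple_mul_eq_mul_simple {J : Set B} {d : W} (hd : d ∈ DLeft cs J) {i : B}
    (hid : cs.simple i * d ∉ DLeft cs J) : ∃ j ∈ J, cs.simple i * d = d * cs.simple j := by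
  simp only [DLeft, Set.mem_ofPred_eq, not_forall, not_lt] at hid
  obtain ⟨j, hj, hle⟩ := hid
  have hlt := lt_of_le_of_ne hle (cs.length_mul_simple_ne _ j)
  rcases exchange_of_mem_WPar cs (mem_WPar_univ cs (cs.simple i)) hlt with
    hdj | ⟨x', -, hx', hx'd⟩
  · exact absurd (hd j hj) (not_lt.mpr hdj.le)
  · rw [cs.length_simple, Nat.lt_one_iff, cs.length_eq_zero_iff] at hx'
    refine ⟨j, hj, ?_⟩
    rw [hx', one_mul] at hx'd
    simpa [mul_assoc] using congrArg (cs.simple i * ·) hx'd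

theorem conj_mem_WPar_of_mem_WPar_conjInter {J K : Set B} {d c : W}
    (hc : c ∈ WPar cs (conjInter cs J K d)) : d⁻¹ * c * d ∈ WPar cs J := by
  have hle : Subgroup.closure (cs.simple '' conjInter cs J K d) ≤
      (Subgroup.closure (cs.simple '' J)).comap (MulAut.conj d⁻¹).toMonoidHom := by
    rw [Subgroup.closure_le]
    rintro _ ⟨i, ⟨-, j, hj, hij⟩, rfl⟩
    simpa [hij, mul_assoc] using Subgroup.subset_closure (Set.mem_image_of_mem cs.simple hj)
  exact (by simpa using hle hc : d⁻¹ * c * d ∈ Subgroup.closure _)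

theorem mem_WPar_conjInter {J K : Set B} {d : W} (hd : d ∈ DRight cs K ∩ DLeft cs J) {c : W}
    (hcK : c ∈ WPar cs K) (hcJ : d⁻¹ * c * d ∈ WPar cs J) :
    c ∈ WPar cs (conjInter cs J K d) := by
  revert hcJ
  refine induction_WPar_left cs
    (p := fun c => d⁻¹ * c * d ∈ WPar cs J → c ∈ WPar cs (conjInter cs J K d))
    (fun _ => one_mem_WPar cs _) (fun c hc i hi hlen ih hJ => ?_) hcK
  by_cases hid : cs.simple i * d ∈ DLeft cs J
  · -- `(s_i d) (d⁻¹ s_i c d) = c d` would have length `l(c) + l(d) + 2`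
    exfalso
    have h1 := length_mul_of_mem_DLeft cs hid hJ
    have h2 := length_mul_of_mem_DLeft cs hd.2 hJ
    have h3 := length_mul_of_mem_DRight cs hd.1 hc
    have h4 := length_mul_of_mem_DRight cs hd.1 (mul_mem_WPar cs (simple_mem_WPar cs hi) hc)
    have h5 := length_mul_of_mem_DRight cs hd.1 (simple_mem_WPar cs hi)
    simp only [mul_assoc, mul_inv_cancel_left, cs.simple_mul_simple_cancel_left] at h1 h2 h3 h4 h5
    rw [cs.length_simple] at h5
    omega
  · obtain ⟨j, hj, hij⟩ := exists_simple_mul_eq_mul_simple cs hd.2 hid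
    have hiL : i ∈ conjInter cs J K d := ⟨hi, j, hj, by rw [← hij, mul_inv_cancel_right]⟩
    have hcJ : d⁻¹ * c * d = cs.simple j * (d⁻¹ * (cs.simple i * c) * d) := by
      rw [← inv_mul_eq_iff_eq_mul.mpr hij]
      simp [mul_assoc]
    exact mul_mem_WPar cs (simple_mem_WPar cs hiL)
      (ih (hcJ ▸ mul_mem_WPar cs (simple_mem_WPar cs hj) hJ))

theorem mul_mem_DLeft_of_mem_DLeft_conjInter {J K : Set B} {d v : W}
    (hd : d ∈ DRight cs K ∩ DLeft cs J) (hv : v ∈ WPar cs K ∩ DLeft cs (conjInter cs J K d)) :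
    v * d ∈ DLeft cs J := by
  intro j hj
  by_contra hle
  have hlt := lt_of_le_of_ne (not_lt.mp hle) (cs.length_mul_simple_ne _ j)
  rcases exchange_of_mem_WPar cs hv.1 hlt with hdj | ⟨x', hx'K, hx', hx'd⟩
  · exact absurd (hd.2 j hj) (not_lt.mpr hdj.le)
  · have hconj : d⁻¹ * (v⁻¹ * x') * d = cs.simple j := by
      rw [← mul_assoc, mul_assoc _ x', hx'd]
      group
    have hL := mem_WPar_conjInter cs hd (mul_mem_WPar cs (inv_mem_WPar cs hv.1) hx'K)
      (hconj ▸ simple_mem_WPar cs hj)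
    have := length_mul_of_mem_DLeft cs hv.2 hL
    rw [mul_inv_cancel_left] at this
    omega

/-- Every element of the double coset `W_K d W_J`, for `d ∈ D_{K,J}`, has a factorization
`v * d * u` with `v ∈ D^K_{K ∩ dJd⁻¹}`, `u ∈ W_J`, and `l(vdu) = l(v) + l(d) + l(u)`. -/
theorem doubleCoset_factorization (J K : Set B) (d : W)
    (hd : d ∈ DRight cs K ∩ DLeft cs J) (w : W)
    (hw : ∃ a ∈ WPar cs K, ∃ b ∈ WPar cs J, w = a * d * b) :
    ∃ v ∈ WPar cs K ∩ DLeft cs (conjInter cs J K d), ∃ u ∈ WPar cs J,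
      w = v * d * u ∧ cs.length w = cs.length v + cs.length d + cs.length u := by
  obtain ⟨a, ha, b, hb, rfl⟩ := hw
  obtain ⟨v, hvD, c, hc, rfl⟩ := exists_mem_DLeft_mul_eq cs a (conjInter cs J K d)
  have hcK : c ∈ WPar cs K := WPar_mono cs (fun i hi => hi.1) hc
  have hv : v ∈ WPar cs K ∩ DLeft cs (conjInter cs J K d) :=
    ⟨by simpa using mul_mem_WPar cs ha (inv_mem_WPar cs hcK), hvD⟩
  have hu : d⁻¹ * c * d * b ∈ WPar cs J :=
    mul_mem_WPar cs (conj_mem_WPar_of_mem_WPar_conjInter cs hc) hb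
  refine ⟨v, hv, _, hu, by group, ?_⟩
  rw [show v * c * d * b = v * d * (d⁻¹ * c * d * b) by group,
    length_mul_of_mem_DLeft cs (mul_mem_DLeft_of_mem_DLeft_conjInter cs hd hv) hu,
    length_mul_of_mem_DRight cs hd.1 hv.1]

end
end

section
/- Let (W,S) be a Coxeter system, let 𝓘 ⊆ W be an ideal of W with respect to the left weak order, let K ⊆ S, and let d be a minimal length right coset representative of W_K (i.e. d ∈ D_K⁻¹) with d ∈ 𝓘. Then the set 𝓘_d = {v ∈ W_K : vd ∈ 𝓘} is an ideal of W_K with respect to the left weak order on W_K. -/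
/-!
Lengths add across a parabolic coset: if `d` has no left descent in `K`, then
`ℓ (u * d) = ℓ u + ℓ d` for every `u ∈ W_K`, so `v ≤_L w` in `W_K` gives `v * d ≤_L w * d`, and
the ideal property of `𝓘` does the rest.

The additivity is Humphreys' argument. It holds for a shortest element `d₀` of the coset `W_K d`,
by induction on `u`: if `s ∈ K` is a left descent of `u * d₀` but not of `u`, the exchange condition
deletes a letter from the concatenation of reduced words for `u` and `d₀`; the letter cannot come
from the word for `u`, and if it comes from the word for `d₀` it produces the shorter element
`(u⁻¹ s u) * d₀` of the coset. Then `d = v * d₀` with `v ∈ W_K` having no left descent in `K`,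
which forces `v = 1`.

The exchange condition comes from the reflection cocycle: `W` acts on `W × ZMod 2` by
`s • (t, e) = (s t s, e + [t = s])`, so the parity of the number of occurrences of `t` in the right
inversion sequence of a word depends only on the element the word represents.
-/

section
variable {B W : Type*} [Group W] {M : CoxeterMatrix B} (cs : CoxeterSystem M W)

/-- The left weak order: `v ≤_L w` iff `l(w) = l(wv⁻¹) + l(v)`. -/
def leftWeakLE (v w : W) : Prop :=
  cs.length w = cs.length (w * v⁻¹) + cs.length v

theorem leftWeakLE.mul_right {v w d : W} (hv : cs.length (v * d) = cs.length v + cs.length d)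
    (hw : cs.length (w * d) = cs.length w + cs.length d) (h : leftWeakLE cs v w) :
    leftWeakLE cs (v * d) (w * d) := by
  unfold leftWeakLE at h ⊢
  rw [show w * d * (v * d)⁻¹ = w * v⁻¹ by group, hv, hw]
  omega

theorem inv_pow_mul_mul_pow_of_inv_mul_eq {G : Type*} [Group G] {a r : G} (h : a⁻¹ * r = r * a)
    (k : ℕ) : (a ^ k)⁻¹ * r * a ^ k = r * a ^ (2 * k) := by
  induction k with
  | zero => simp
  | succ k ih =>
    calc (a ^ (k + 1))⁻¹ * r * a ^ (k + 1) = a⁻¹ * ((a ^ k)⁻¹ * r * a ^ k) * a := by group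
      _ = a⁻¹ * r * a ^ (2 * k) * a := by rw [ih]; group
      _ = r * a ^ (2 * (k + 1)) := by rw [h]; group

theorem Function.Periodic.sum_range_two_mul_eq_zero {R : Type*} [Semiring R] [CharP R 2]
    {f : ℕ → R} {m : ℕ} (hf : Function.Periodic f m) : ∑ l ∈ Finset.range (2 * m), f l = 0 := by
  rw [two_mul, Finset.sum_range_add, Finset.sum_congr rfl fun x _ ↦ (add_comm m x ▸ hf x :)]
  exact CharTwo.add_self_eq_zero _

namespace CoxeterSystem

open List

local prefix:100 "s " => cs.simple
local prefix:100 "π " => cs.wordProd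
local prefix:100 "ℓ " => cs.length
local prefix:100 "ris " => cs.rightInvSeq
local prefix:100 "lis " => cs.leftInvSeq

section Cocycle

variable [DecidableEq W]

def reflectionPerm (i : B) : Equiv.Perm (W × ZMod 2) :=
  Function.Involutive.toPerm (fun p ↦ (s i * p.1 * s i, p.2 + if p.1 = s i then 1 else 0)) <| by
    rintro ⟨t, e⟩
    have hconj : s i * t * s i = s i ↔ t = s i := by
      constructor
      · intro h
        simpa [mul_assoc, simple_mul_simple_cancel_left] using congrArg (s i * · * s i) h
      · rintro rfl
        rw [simple_mul_simple_cancel_right]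
    ext
    · simp [mul_assoc, simple_mul_simple_cancel_left]
    · by_cases h : t = s i <;> simp [hconj, h, add_assoc, CharTwo.add_self_eq_zero]

theorem reflectionPerm_apply (i : B) (t : W) (e : ZMod 2) :
    cs.reflectionPerm i (t, e) = (s i * t * s i, e + if t = s i then 1 else 0) := rfl

theorem reflectionPerm_mul_reflectionPerm_apply (i j : B) (t : W) (e : ZMod 2) :
    (cs.reflectionPerm i * cs.reflectionPerm j) (t, e) =
      (s i * s j * t * (s i * s j)⁻¹,
        e + ((if t = s j then 1 else 0) + if t = s j * (s i * s j) then 1 else 0)) := by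
  have hconj : s j * t * s j = s i ↔ t = s j * (s i * s j) := by
    constructor
    · rintro h
      rw [← h]
      simp [mul_assoc, simple_mul_simple_cancel_left]
    · rintro rfl
      simp [← mul_assoc, simple_mul_simple_self]
  simp only [Equiv.Perm.mul_apply, reflectionPerm_apply, hconj]
  simp only [mul_inv_rev, inv_simple, add_assoc, mul_assoc]

theorem reflectionPerm_mul_reflectionPerm_pow_apply (i j : B) (k : ℕ) (t : W) (e : ZMod 2) :
    ((cs.reflectionPerm i * cs.reflectionPerm j) ^ k) (t, e) =
      ((s i * s j) ^ k * t * ((s i * s j) ^ k)⁻¹,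
        e + ∑ l ∈ Finset.range (2 * k), if t = s j * (s i * s j) ^ l then 1 else 0) := by
  set a := s i * s j with ha_def
  have ha : a⁻¹ * s j = s j * a := by
    simp only [a, mul_inv_rev, inv_simple, mul_assoc]
  have hconj (k : ℕ) (x : W) : a ^ k * t * (a ^ k)⁻¹ = x ↔ t = (a ^ k)⁻¹ * x * a ^ k := by
    constructor <;> rintro rfl <;> group
  induction k with
  | zero => simp
  | succ k ih =>
    have h₁ : (a ^ k)⁻¹ * s j * a ^ k = s j * a ^ (2 * k) :=
      inv_pow_mul_mul_pow_of_inv_mul_eq ha k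
    have h₂ : (a ^ k)⁻¹ * (s j * a) * a ^ k = s j * a ^ (2 * k + 1) := by
      calc (a ^ k)⁻¹ * (s j * a) * a ^ k = (a ^ k)⁻¹ * s j * a ^ k * a := by group
        _ = s j * a ^ (2 * k + 1) := by rw [h₁, mul_assoc, ← pow_succ]
    rw [pow_succ', Equiv.Perm.mul_apply, ih, reflectionPerm_mul_reflectionPerm_apply, ← ha_def]
    simp only [hconj, h₁, h₂]
    rw [Nat.mul_succ, Finset.sum_range_succ, Finset.sum_range_succ]
    ext
    · simp only [pow_succ']
      group
    · simp only [add_assoc]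

theorem isLiftable_reflectionPerm : M.IsLiftable cs.reflectionPerm := by
  intro i j
  ext ⟨t, e⟩ : 1
  have hperiodic : Function.Periodic
      (fun l ↦ if t = s j * (s i * s j) ^ l then (1 : ZMod 2) else 0) (M i j) := by
    intro l
    simp only [pow_add, simple_mul_simple_pow, mul_one]
  rw [reflectionPerm_mul_reflectionPerm_pow_apply, hperiodic.sum_range_two_mul_eq_zero]
  simp

def reflectionRep : W →* Equiv.Perm (W × ZMod 2) :=
  cs.lift ⟨cs.reflectionPerm, cs.isLiftable_reflectionPerm⟩

def reflectionCocycle (w t : W) : ZMod 2 := (cs.reflectionRep w (t, 0)).2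

theorem reflectionRep_simple (i : B) : cs.reflectionRep (s i) = cs.reflectionPerm i :=
  cs.lift_apply_simple cs.isLiftable_reflectionPerm i

theorem reflectionRep_apply (w t : W) (e : ZMod 2) :
    cs.reflectionRep w (t, e) = (w * t * w⁻¹, e + cs.reflectionCocycle w t) := by
  suffices h : ∀ t, ∃ c, ∀ e, cs.reflectionRep w (t, e) = (w * t * w⁻¹, e + c) by
    obtain ⟨c, hc⟩ := h t
    rw [reflectionCocycle, hc e, hc 0, zero_add]
  induction w using cs.simple_induction_left with
  | one => exact fun t ↦ ⟨0, fun e ↦ by simp⟩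
  | mul_simple_left w i ih =>
    intro t
    obtain ⟨c, hc⟩ := ih t
    refine ⟨c + if w * t * w⁻¹ = s i then 1 else 0, fun e ↦ ?_⟩
    rw [map_mul, Equiv.Perm.mul_apply, hc, reflectionRep_simple, reflectionPerm_apply]
    simp only [mul_inv_rev, inv_simple, mul_assoc, add_assoc]

theorem reflectionCocycle_mul (u v t : W) :
    cs.reflectionCocycle (u * v) t =
      cs.reflectionCocycle v t + cs.reflectionCocycle u (v * t * v⁻¹) := by
  rw [reflectionCocycle, map_mul, Equiv.Perm.mul_apply, reflectionRep_apply, reflectionRep_apply,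
    zero_add]

@[simp] theorem reflectionCocycle_one (t : W) : cs.reflectionCocycle 1 t = 0 := by
  simp [reflectionCocycle]

theorem reflectionCocycle_simple (i : B) (t : W) :
    cs.reflectionCocycle (s i) t = if t = s i then 1 else 0 := by
  rw [reflectionCocycle, reflectionRep_simple, reflectionPerm_apply, zero_add]

theorem reflectionCocycle_wordProd (ω : List B) (t : W) :
    cs.reflectionCocycle (π ω) t = (ris ω).count t := by
  induction ω with
  | nil => simp
  | cons i ω ih =>
    have hconj : π ω * t * (π ω)⁻¹ = s i ↔ (π ω)⁻¹ * s i * π ω = t := by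
      constructor
      · intro h
        rw [← h]
        group
      · rintro rfl
        group
    rw [wordProd_cons, reflectionCocycle_mul, ih, reflectionCocycle_simple, rightInvSeq, count_cons]
    simp [hconj]

theorem reflectionCocycle_self {t : W} (ht : cs.IsReflection t) : cs.reflectionCocycle t t = 1 := by
  obtain ⟨q, i, rfl⟩ := ht
  have h₁ := cs.reflectionCocycle_mul (q * s i) q⁻¹ (q * s i * q⁻¹)
  have h₂ := cs.reflectionCocycle_mul q (s i) (s i)
  have h₃ := cs.reflectionCocycle_mul q q⁻¹ (q * s i * q⁻¹)
  have hq : q⁻¹ * (q * s i * q⁻¹) * q⁻¹⁻¹ = s i := by group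
  simp only [hq, mul_inv_cancel, reflectionCocycle_one, reflectionCocycle_simple,
    simple_mul_simple_cancel_right, inv_simple, if_true] at h₁ h₂ h₃
  linear_combination h₁ + h₂ - h₃

theorem reflectionCocycle_mul_self {t : W} (ht : cs.IsReflection t) (w : W) :
    cs.reflectionCocycle (w * t) t = cs.reflectionCocycle w t + 1 := by
  rw [reflectionCocycle_mul, cs.reflectionCocycle_self ht, ht.inv, ht.mul_self, one_mul, add_comm]

theorem mem_rightInvSeq_of_reflectionCocycle_eq_one {ω : List B} {t : W}
    (h : cs.reflectionCocycle (π ω) t = 1) : t ∈ ris ω := by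
  rw [← count_pos_iff, Nat.pos_iff_ne_zero]
  intro h0
  rw [reflectionCocycle_wordProd, h0, Nat.cast_zero] at h
  exact zero_ne_one h

theorem length_mul_lt_of_reflectionCocycle_eq_one {w t : W} (h : cs.reflectionCocycle w t = 1) :
    ℓ (w * t) < ℓ w := by
  obtain ⟨ω, hω, rfl⟩ := cs.exists_isReduced w
  exact (cs.isRightInversion_of_mem_rightInvSeq hω
    (cs.mem_rightInvSeq_of_reflectionCocycle_eq_one h)).2

theorem reflectionCocycle_eq_one_of_length_mul_lt {w t : W} (ht : cs.IsReflection t)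
    (h : ℓ (w * t) < ℓ w) : cs.reflectionCocycle w t = 1 := by
  obtain h0 | h1 : cs.reflectionCocycle w t = 0 ∨ cs.reflectionCocycle w t = 1 := by
    generalize cs.reflectionCocycle w t = x
    decide +revert
  · have := cs.length_mul_lt_of_reflectionCocycle_eq_one
      (by rw [cs.reflectionCocycle_mul_self ht, h0, zero_add] : cs.reflectionCocycle (w * t) t = 1)
    rw [mul_assoc, ht.mul_self, mul_one] at this
    omega
  · exact h1

end Cocycle

theorem mem_rightInvSeq_of_length_mul_lt {ω : List B} {t : W} (ht : cs.IsReflection t)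
    (h : ℓ (π ω * t) < ℓ (π ω)) : t ∈ ris ω := by
  classical
  exact cs.mem_rightInvSeq_of_reflectionCocycle_eq_one
    (cs.reflectionCocycle_eq_one_of_length_mul_lt ht h)

theorem mem_leftInvSeq_of_length_mul_lt {ω : List B} {t : W} (ht : cs.IsReflection t)
    (h : ℓ (t * π ω) < ℓ (π ω)) : t ∈ lis ω := by
  have hrev : ℓ (π ω.reverse * t) < ℓ (π ω.reverse) := by
    rwa [wordProd_reverse, ← length_inv, mul_inv_rev, inv_inv, ht.inv, length_inv]
  rw [← mem_reverse, ← rightInvSeq_reverse]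
  exact cs.mem_rightInvSeq_of_length_mul_lt ht hrev

theorem exists_sublist_of_length_mul_lt {ω : List B} {t : W} (ht : cs.IsReflection t)
    (h : ℓ (t * π ω) < ℓ (π ω)) :
    ∃ ω', ω' <+ ω ∧ ω'.length + 1 = ω.length ∧ t * π ω = π ω' := by
  obtain ⟨j, hj, rfl⟩ := mem_iff_getElem.mp (cs.mem_leftInvSeq_of_length_mul_lt ht h)
  rw [length_leftInvSeq] at hj
  refine ⟨ω.eraseIdx j, eraseIdx_sublist ω j, length_eraseIdx_add_one hj, ?_⟩
  rw [← getD_leftInvSeq_mul_wordProd, getD_eq_getElem]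

section Parabolic

variable {K : Set B}

theorem exists_isReduced_of_mem_closure_simple_image {u : W}
    (hu : u ∈ Subgroup.closure (cs.simple '' K)) :
    ∃ ω, cs.IsReduced ω ∧ (∀ i ∈ ω, i ∈ K) ∧ u = π ω := by
  have step : ∀ i ∈ K, ∀ ω, cs.IsReduced ω → (∀ j ∈ ω, j ∈ K) →
      ∃ ω', cs.IsReduced ω' ∧ (∀ j ∈ ω', j ∈ K) ∧ s i * π ω = π ω' := by
    intro i hi ω hω hωK
    rcases cs.length_simple_mul (π ω) i with hup | hdown
    · refine ⟨i :: ω, ?_, by simpa [hi] using hωK, (wordProd_cons ..).symm⟩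
      rw [IsReduced, wordProd_cons, hup, hω.eq, length_cons]
    · obtain ⟨ω', hsub, hlen, heq⟩ :=
        cs.exists_sublist_of_length_mul_lt (ω := ω) (cs.isReflection_simple i) (by omega)
      refine ⟨ω', ?_, fun j hj ↦ hωK j (hsub.subset hj), heq⟩
      rw [IsReduced, ← heq]
      have := hω.eq
      omega
  induction hu using Subgroup.closure_induction_left with
  | one => exact ⟨[], by simp [IsReduced], by simp, rfl⟩
  | mul_left x hx y _ ih =>
    obtain ⟨i, hi, rfl⟩ := hx
    obtain ⟨ω, hω, hωK, rfl⟩ := ih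
    exact step i hi ω hω hωK
  | inv_mul_cancel x hx y _ ih =>
    obtain ⟨i, hi, rfl⟩ := hx
    obtain ⟨ω, hω, hωK, rfl⟩ := ih
    rw [inv_simple]
    exact step i hi ω hω hωK

theorem eq_one_of_forall_length_lt_length_simple_mul {v : W}
    (hv : v ∈ Subgroup.closure (cs.simple '' K)) (h : ∀ i ∈ K, ℓ v < ℓ (s i * v)) : v = 1 := by
  obtain ⟨_ | ⟨i, ω⟩, hω, hωK, rfl⟩ := cs.exists_isReduced_of_mem_closure_simple_image hv
  · exact wordProd_nil cs
  · have hlt := h i (hωK i mem_cons_self)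
    rw [wordProd_cons, simple_mul_simple_cancel_left, ← wordProd_cons, hω.eq, length_cons] at hlt
    have := cs.length_wordProd_le ω
    omega

theorem length_simple_mul_mul_of_forall_length_le {d : W}
    (hmin : ∀ x ∈ Subgroup.closure (cs.simple '' K), ℓ d ≤ ℓ (x * d)) {i : B} (hi : i ∈ K) {u : W}
    (hu : u ∈ Subgroup.closure (cs.simple '' K)) (hud : ℓ (u * d) = ℓ u + ℓ d) :
    ℓ (s i * u * d) = ℓ (s i * u) + ℓ d := by
  rcases cs.length_simple_mul u i with hup | hdown
  · by_contra hne
    have hdescent : ℓ (s i * (u * d)) < ℓ (u * d) := by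
      rcases cs.length_simple_mul (u * d) i with h | h
      · rw [← mul_assoc] at h
        omega
      · omega
    obtain ⟨ω, hω, rfl⟩ := cs.exists_isReduced u
    obtain ⟨δ, hδ, rfl⟩ := cs.exists_isReduced d
    rw [← wordProd_append] at hdescent
    obtain ⟨ρ, hsub, hlen, heq⟩ :=
      cs.exists_sublist_of_length_mul_lt (cs.isReflection_simple i) hdescent
    obtain ⟨r₁, r₂, rfl, h₁, h₂⟩ := sublist_append_iff.mp hsub
    rw [length_append, length_append] at hlen
    rw [wordProd_append, wordProd_append] at heq
    have := h₁.length_le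
    have := h₂.length_le
    rcases Nat.lt_or_ge r₁.length ω.length with hr₁ | hr₁
    · rw [h₂.eq_of_length (by omega), ← mul_assoc] at heq
      have := cs.length_wordProd_le r₁
      rw [← mul_right_cancel heq, hup, hω.eq] at this
      omega
    · rw [h₁.eq_of_length (by omega)] at heq
      have hr₂ : π r₂ = ((π ω)⁻¹ * s i * π ω) * π δ := by
        calc π r₂ = (π ω)⁻¹ * (π ω * π r₂) := by group
          _ = _ := by rw [← heq]; group
      have hconj : (π ω)⁻¹ * s i * π ω ∈ Subgroup.closure (cs.simple '' K) :=
        mul_mem (mul_mem (inv_mem hu) (Subgroup.subset_closure ⟨i, hi, rfl⟩)) hu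
      have hle := hmin _ hconj
      rw [← hr₂, hδ.eq] at hle
      have := cs.length_wordProd_le r₂
      omega
  · have h₁ := cs.length_mul_le (s i * u) d
    have h₂ := cs.length_simple_mul (u * d) i
    rw [← mul_assoc] at h₂
    omega

theorem length_mul_eq_add_of_forall_length_le {d : W}
    (hmin : ∀ x ∈ Subgroup.closure (cs.simple '' K), ℓ d ≤ ℓ (x * d)) {u : W}
    (hu : u ∈ Subgroup.closure (cs.simple '' K)) : ℓ (u * d) = ℓ u + ℓ d := by
  induction hu using Subgroup.closure_induction_left with
  | one => simp
  | mul_left x hx y hy ih =>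
    obtain ⟨i, hi, rfl⟩ := hx
    exact cs.length_simple_mul_mul_of_forall_length_le hmin hi hy ih
  | inv_mul_cancel x hx y hy ih =>
    obtain ⟨i, hi, rfl⟩ := hx
    rw [inv_simple]
    exact cs.length_simple_mul_mul_of_forall_length_le hmin hi hy ih

theorem length_mul_eq_add_of_forall_length_lt {d : W} (hd : ∀ i ∈ K, ℓ d < ℓ (s i * d)) {u : W}
    (hu : u ∈ Subgroup.closure (cs.simple '' K)) : ℓ (u * d) = ℓ u + ℓ d := by
  obtain ⟨x, hx, hxmin⟩ : ∃ x ∈ Subgroup.closure (cs.simple '' K),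
      ∀ y ∈ Subgroup.closure (cs.simple '' K), ℓ (x * d) ≤ ℓ (y * d) :=
    ⟨_, Function.argminOn_mem _ _ ⟨1, one_mem _⟩,
      fun y hy ↦ Function.argminOn_le (fun x ↦ ℓ (x * d)) _ hy⟩
  have hadd : ∀ y ∈ Subgroup.closure (cs.simple '' K), ℓ (y * (x * d)) = ℓ y + ℓ (x * d) :=
    fun y ↦ cs.length_mul_eq_add_of_forall_length_le fun z hz ↦ by
      simpa [mul_assoc] using hxmin (z * x) (mul_mem hz hx)
  have hx₁ : x⁻¹ = 1 := by
    refine cs.eq_one_of_forall_length_lt_length_simple_mul (inv_mem hx) fun i hi ↦ ?_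
    have hsimple : s i ∈ Subgroup.closure (cs.simple '' K) := Subgroup.subset_closure ⟨i, hi, rfl⟩
    have := hd i hi
    rw [← inv_mul_cancel_left x d, hadd _ (inv_mem hx), ← mul_assoc,
      hadd _ (mul_mem hsimple (inv_mem hx))] at this
    omega
  rw [inv_eq_one.mp hx₁, one_mul] at hadd
  exact hadd u hu

end Parabolic

end CoxeterSystem

theorem restricted_ideal_is_ideal (𝓘 : Set W)
    (hIdeal : ∀ w ∈ 𝓘, ∀ v : W, leftWeakLE cs v w → v ∈ 𝓘)
    (K : Set B) (d : W)
    (hd : ∀ i ∈ K, cs.length (cs.simple i * d) > cs.length d) :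
    ∀ w ∈ (Subgroup.closure (cs.simple '' K) : Subgroup W), w * d ∈ 𝓘 →
      ∀ v ∈ (Subgroup.closure (cs.simple '' K) : Subgroup W), leftWeakLE cs v w →
        v * d ∈ 𝓘 := by
  intro w hw hwd v hv hvw
  exact hIdeal (w * d) hwd (v * d) <| hvw.mul_right cs
    (cs.length_mul_eq_add_of_forall_length_lt hd hv)
    (cs.length_mul_eq_add_of_forall_length_lt hd hw)

end
end
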